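/- arXiv:q-alg/9712044 — 2 statements merged into one kernel-verified Lean document; each statement's English description precedes it below -/
import Mathlib

section
/- Let φ : Γ(B) → Γ(B') be an A-module morphism of section modules of vector bundles over S, and define F_φ^x : E_x → E_x' by F_φ^x(v) = φ(s)(x) for any section s with s(x) = v. Then F_φ^x is well defined (independent of the choice of s), F-linear, and satisfies the equivariance F_φ^y ∘ g = g ∘ F_φ^{g⁻¹y} for all g ∈ G, y ∈ S. -/
/-!
Multiplying a section by `δ_x` gives the section supported at `x` with the same value there,
and `φ (δ_x • s) x = δ_x x • φ s x = φ s x` by `k`-linearity. Hence `φ s x` depends only on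
`s x`, and `F_φ^x v := φ (δ_x v) x` is well defined and `F`-linear. Equivariance is the
`G`-linearity of `φ` evaluated at `x`, once every vector of a fibre is written as the value
of a section.
-/

theorem Pi.single_one_smul {S R : Type*} [DecidableEq S] [MonoidWithZero R] {E : S → Type*}
    [∀ x, Zero (E x)] [∀ x, MulActionWithZero R (E x)] (x : S) (s : ∀ x, E x) :
    Pi.single (M := fun _ => R) x 1 • s = Pi.single x (s x) := by
  ext y
  rcases eq_or_ne y x with rfl | hy
  · simp
  · simp [hy]

namespace LinearMap

variable {S R : Type*} [Semiring R] {E E' : S → Type*}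
  [∀ x, AddCommMonoid (E x)] [∀ x, Module R (E x)]
  [∀ x, AddCommMonoid (E' x)] [∀ x, Module R (E' x)]

open Classical in
noncomputable def fibreMap (φ : (∀ x, E x) →ₗ[S → R] (∀ x, E' x)) (x : S) : E x →ₗ[R] E' x :=
  proj x ∘ₗ φ.restrictScalars R ∘ₗ single R E x

theorem fibreMap_eval (φ : (∀ x, E x) →ₗ[S → R] (∀ x, E' x)) (s : ∀ x, E x) (x : S) :
    fibreMap φ x (s x) = φ s x := by
  classical
  change φ (Pi.single x (s x)) x = φ s x
  rw [← Pi.single_one_smul (R := R), map_smul, Pi.smul_apply', Pi.single_eq_same, one_smul]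

theorem fibreMap_equivariant {G : Type*} [Group G] [MulAction G S]
    {ρ : ∀ (g : G) (x : S), E (g⁻¹ • x) →ₗ[R] E x}
    {ρ' : ∀ (g : G) (x : S), E' (g⁻¹ • x) →ₗ[R] E' x}
    {φ : (∀ x, E x) →ₗ[S → R] (∀ x, E' x)}
    (hφ : ∀ (g : G) (s : ∀ x, E x) (x : S),
      φ (fun y => ρ g y (s (g⁻¹ • y))) x = ρ' g x (φ s (g⁻¹ • x)))
    (g : G) (x : S) (v : E (g⁻¹ • x)) :
    fibreMap φ x (ρ g x v) = ρ' g x (fibreMap φ (g⁻¹ • x) v) := by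
  obtain ⟨s, rfl⟩ := Function.surjective_eval (β := E) (g⁻¹ • x) v
  calc fibreMap φ x (ρ g x (s (g⁻¹ • x)))
      = φ (fun y => ρ g y (s (g⁻¹ • y))) x := fibreMap_eval φ (fun y => ρ g y (s (g⁻¹ • y))) x
    _ = ρ' g x (φ s (g⁻¹ • x)) := hφ g s x
    _ = ρ' g x (fibreMap φ (g⁻¹ • x) (s (g⁻¹ • x))) := by rw [fibreMap_eval]

end LinearMap

/-- an `A`-module morphism `φ : Γ(B) → Γ(B')` of section modules
(k-linear and `G`-equivariant) induces, for each `x ∈ S`, a well-defined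
`F`-linear fibre map `F_φ^x : E_x → E'_x` with `F_φ^x(s(x)) = φ(s)(x)`,
satisfying the equivariance `F_φ^y ∘ g = g ∘ F_φ^{g⁻¹ y}`. -/
theorem fibre_maps_of_morphism (S F G : Type*) [Field F] [Group G]
    [MulAction G S]
    (E E' : S → Type*)
    [∀ x, AddCommGroup (E x)] [∀ x, Module F (E x)]
    [∀ x, AddCommGroup (E' x)] [∀ x, Module F (E' x)]
    (ρ : ∀ (g : G) (x : S), E (g⁻¹ • x) →ₗ[F] E x)
    (ρ' : ∀ (g : G) (x : S), E' (g⁻¹ • x) →ₗ[F] E' x)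
    (φ : (∀ x, E x) →ₗ[S → F] (∀ x, E' x))
    (hequiv : ∀ (g : G) (s : ∀ x, E x) (x : S),
      φ (fun y => ρ g y (s (g⁻¹ • y))) x = ρ' g x (φ s (g⁻¹ • x))) :
    ∃ Fφ : ∀ x : S, E x →ₗ[F] E' x,
      (∀ (s : ∀ x, E x) (x : S), Fφ x (s x) = φ s x) ∧
      (∀ (g : G) (x : S) (v : E (g⁻¹ • x)),
        Fφ x (ρ g x v) = ρ' g x (Fφ (g⁻¹ • x) v)) :=
  ⟨LinearMap.fibreMap φ, LinearMap.fibreMap_eval φ, LinearMap.fibreMap_equivariant hequiv⟩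
end

section
/- With notation as above, for a fixed x ∈ S, the A-morphism φ : Γ(B) → Γ(B') is surjective if and only if the induced fibre map F_φ^x : E_x → E_x' is surjective. -/
/-- for a fixed `x ∈ S`, an `A`-module morphism
`φ : Γ(B) → Γ(B')` of section modules is surjective if and only if the induced
fibre map `F_φ^x : E_x → E'_x` is surjective. -/
theorem morphism_surjective_iff_fibre (S F G : Type*) [Field F] [Group G]
    [MulAction G S] [MulAction.IsPretransitive G S]
    (E E' : S → Type*)
    [∀ x, AddCommGroup (E x)] [∀ x, Module F (E x)]
    [∀ x, AddCommGroup (E' x)] [∀ x, Module F (E' x)]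
    (ρ : ∀ (g : G) (x : S), E (g⁻¹ • x) →ₗ[F] E x)
    (ρ' : ∀ (g : G) (x : S), E' (g⁻¹ • x) →ₗ[F] E' x)
    (hρ : ∀ (g : G) (x : S), Function.Bijective (ρ g x))
    (hρ' : ∀ (g : G) (x : S), Function.Bijective (ρ' g x))
    (φ : (∀ x, E x) →ₗ[S → F] (∀ x, E' x))
    (Fφ : ∀ x : S, E x →ₗ[F] E' x)
    (hF : ∀ (s : ∀ x, E x) (x : S), Fφ x (s x) = φ s x)
    (hFequiv : ∀ (g : G) (x : S) (v : E (g⁻¹ • x)),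
      Fφ x (ρ g x v) = ρ' g x (Fφ (g⁻¹ • x) v))
    (x : S) :
    Function.Surjective φ ↔ Function.Surjective (Fφ x) := by
  classical
  constructor
  · intro h w
    obtain ⟨s, hs⟩ := h (Function.update (fun y => (0 : E' y)) x w)
    refine ⟨s x, ?_⟩
    rw [hF, hs, Function.update_self]
  · intro h t
    have hy : ∀ y, Function.Surjective (Fφ y) := by
      intro y
      obtain ⟨g, hg⟩ := MulAction.exists_smul_eq G x y
      have hx : g⁻¹ • y = x := by rw [← hg, inv_smul_smul]
      subst hx
      intro w
      obtain ⟨v', hv'⟩ := (hρ' g y).2 w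
      obtain ⟨u, hu⟩ := h v'
      exact ⟨ρ g y u, by rw [hFequiv, hu, hv']⟩
    choose s hs using fun y => hy y (t y)
    exact ⟨s, funext fun y => by rw [← hF]; exact hs y⟩
end
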